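/- arXiv:2005.06116 — 2 statements merged into one kernel-verified Lean document; each statement's English description precedes it below -/
import Mathlib

section
/- Let α > 1 and define S(x) = ∫₁^x (1 + cos((log u)^α)) du for x ≥ 1. Then limsup_{x→∞} (log x)^{α−1} |S(x) − x| / x = 1/α. In particular, for every ε > 0, S(x) − x is not O(x^{1−ε}), so S disproves Müger's conjecture that S(x) = Ax + O(x^{(σ₀+2)/3+ε}) should follow from analytic continuation of the Mellin transform past Re s = σ₀ ∈ (0,1). -/
/-!
Substituting `u = exp t` turns `S(x) - x` into `∫₀^T exp t * cos (t ^ α) dt - 1` with `T = log x`.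
Integrating by parts twice against `d(sin (t ^ α)) = α t ^ (α - 1) cos (t ^ α) dt` shows that this
integral is `exp T * sin (T ^ α) * T ^ (1 - α) / α + o(exp T * T ^ (1 - α))`: every remainder is
an integral of `exp t * t ^ c` times a bounded factor with `c < 1 - α`, which is
`o(exp T * T ^ (1 - α))`. Hence
`(log x) ^ (α - 1) * |S(x) - x| / x = |sin ((log x) ^ α)| / α + o(1)`, whose limsup is `1 / α`
because `sin (T ^ α) = 1` for arbitrarily large `T`. A bound `S(x) - x = O(x ^ (1 - ε))` would
instead force this quantity to tend to `0`.
-/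

open MeasureTheory Set Filter Real Asymptotics Topology

lemma IntervalIntegrable.of_continuousOn_Ioi {f : ℝ → ℝ} (hf : ContinuousOn f (Ioi 0)) {a b : ℝ}
    (ha : 0 < a) (hb : 0 < b) : IntervalIntegrable f volume a b :=
  (hf.mono (ordConnected_Ioi.uIcc_subset ha hb)).intervalIntegrable

lemma isBigO_mul_of_abs_le_one {ι : Type*} {l : Filter ι} {f w : ι → ℝ} (hw : ∀ t, |w t| ≤ 1) :
    (fun t => f t * w t) =O[l] f :=
  IsBigO.of_bound 1 (.of_forall fun t => by
    rw [norm_mul, one_mul]; exact mul_le_of_le_one_right (norm_nonneg _) (hw t))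

lemma Filter.limsup_eq_of_tendsto_sub {ι : Type*} {l : Filter ι} [l.NeBot] {u v : ι → ℝ}
    (h : Tendsto (u - v) l (𝓝 0)) (hv : IsBoundedUnder (· ≤ ·) l v)
    (hv' : IsBoundedUnder (· ≥ ·) l v) :
    limsup u l = limsup v l := by
  have hu : u = v + (u - v) := by abel
  have hcob := hv'.isCoboundedUnder_le
  apply le_antisymm
  · calc limsup u l ≤ limsup v l + limsup (u - v) l := by
          conv_lhs => rw [hu]
          exact limsup_add_le hv' hv h.isBoundedUnder_ge.isCoboundedUnder_le h.isBoundedUnder_le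
      _ = limsup v l := by rw [h.limsup_eq, add_zero]
  · calc limsup v l = limsup v l + liminf (u - v) l := by rw [h.liminf_eq, add_zero]
      _ ≤ limsup u l := by
          conv_rhs => rw [hu]
          exact le_limsup_add hv hcob h.isBoundedUnder_le h.isBoundedUnder_ge

section ExpRpow

variable {c d : ℝ}

lemma isLittleO_exp_mul_rpow (hcd : c < d) :
    (fun T : ℝ => exp T * T ^ c) =o[atTop] fun T => exp T * T ^ d := by
  have hpow : (fun T : ℝ => T ^ c) =o[atTop] fun T => T ^ d := by
    have h := (isLittleO_one_iff ℝ).2 (tendsto_rpow_neg_atTop (sub_pos.2 hcd))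
    refine (h.mul_isBigO (isBigO_refl (fun T : ℝ => T ^ d) atTop)).congr' ?_ (by simp)
    filter_upwards [eventually_gt_atTop 0] with T hT
    rw [neg_sub, ← rpow_add hT, sub_add_cancel]
  exact (isBigO_refl exp atTop).mul_isLittleO hpow

lemma intervalIntegrable_exp_mul_rpow (c : ℝ) {a b : ℝ} (ha : 0 < a) (hb : 0 < b) :
    IntervalIntegrable (fun t : ℝ => exp t * t ^ c) volume a b :=
  .of_continuousOn_Ioi (by fun_prop (disch := intros; simp_all [ne_of_gt])) ha hb

/-- Split at `T / 2`: the first half is at most `exp (T / 2)`, the second at most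
`(T / 2) ^ c * exp T`. -/
lemma integral_exp_mul_rpow_le (hc : c ≤ 0) {T : ℝ} (hT : 2 ≤ T) :
    ∫ t in (1:ℝ)..T, exp t * t ^ c ≤ exp (T / 2) + 2 ^ (-c) * (exp T * T ^ c) := by
  have hT2 : 1 ≤ T / 2 := by linarith
  rw [← intervalIntegral.integral_add_adjacent_intervals (b := T / 2)
    (intervalIntegrable_exp_mul_rpow c one_pos (by linarith))
    (intervalIntegrable_exp_mul_rpow c (by linarith) (by linarith))]
  gcongr
  · calc ∫ t in (1:ℝ)..T / 2, exp t * t ^ c ≤ ∫ t in (1:ℝ)..T / 2, exp t :=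
          intervalIntegral.integral_mono_on hT2
            (intervalIntegrable_exp_mul_rpow c one_pos (by linarith))
            (continuous_exp.intervalIntegrable _ _) fun t ht =>
              mul_le_of_le_one_right (exp_nonneg t) (rpow_le_one_of_one_le_of_nonpos ht.1 hc)
      _ ≤ exp (T / 2) := by rw [integral_exp]; linarith [exp_pos 1]
  · calc ∫ t in T / 2..T, exp t * t ^ c ≤ ∫ t in T / 2..T, exp t * (T / 2) ^ c :=
          intervalIntegral.integral_mono_on (by linarith)
            (intervalIntegrable_exp_mul_rpow c (by linarith) (by linarith))
            (continuous_exp.intervalIntegrable _ _ |>.mul_const _) fun t ht =>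
              mul_le_mul_of_nonneg_left (rpow_le_rpow_of_nonpos (by linarith) ht.1 hc)
                (exp_nonneg t)
      _ ≤ exp T * (T / 2) ^ c := by
          rw [intervalIntegral.integral_mul_const, integral_exp]
          exact mul_le_mul_of_nonneg_right (by linarith [exp_pos (T / 2)]) (by positivity)
      _ = 2 ^ (-c) * (exp T * T ^ c) := by
          rw [div_rpow (by linarith) zero_le_two, rpow_neg zero_le_two]
          ring

lemma isLittleO_integral_exp_mul_rpow (hc : c ≤ 0) (hcd : c < d) :
    (fun T => ∫ t in (1:ℝ)..T, exp t * t ^ c) =o[atTop] fun T => exp T * T ^ d := by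
  have hhalf : (fun T : ℝ => exp (T / 2)) =o[atTop] fun T => exp T * T ^ d := by
    refine (isLittleO_iff_tendsto' ?_).2 ?_
    · filter_upwards [eventually_gt_atTop 0] with T hT h
      exact absurd h (by positivity)
    · refine (tendsto_rpow_mul_exp_neg_mul_atTop_nhds_zero (-d) (1 / 2) one_half_pos).congr' ?_
      filter_upwards [eventually_gt_atTop 0] with T hT
      rw [rpow_neg hT.le, show T / 2 = T + -(1 / 2) * T by ring, exp_add]
      field_simp
  refine IsBigO.trans_isLittleO (g := fun T => exp (T / 2) + 2 ^ (-c) * (exp T * T ^ c)) ?_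
    (hhalf.add ((isLittleO_exp_mul_rpow hcd).const_mul_left _))
  refine IsBigO.of_bound 1 ?_
  filter_upwards [eventually_ge_atTop 2] with T hT
  have hint : 0 ≤ ∫ t in (1:ℝ)..T, exp t * t ^ c :=
    intervalIntegral.integral_nonneg (by linarith) fun t ht =>
      mul_nonneg (exp_nonneg t) (rpow_nonneg (by linarith [ht.1]) c)
  rw [one_mul, norm_of_nonneg hint, norm_of_nonneg (by positivity)]
  exact integral_exp_mul_rpow_le hc hT

lemma isLittleO_integral_of_abs_le {f : ℝ → ℝ} (hf : ∀ t, 1 ≤ t → |f t| ≤ exp t * t ^ c)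
    (hc : c ≤ 0) (hcd : c < d) :
    (fun T => ∫ t in (1:ℝ)..T, f t) =o[atTop] fun T => exp T * T ^ d := by
  refine IsBigO.trans_isLittleO ?_ (isLittleO_integral_exp_mul_rpow hc hcd)
  refine IsBigO.of_bound 1 ?_
  filter_upwards [eventually_ge_atTop 1] with T hT
  rw [one_mul, norm_of_nonneg (intervalIntegral.integral_nonneg hT fun t ht =>
      mul_nonneg (exp_nonneg t) (rpow_nonneg (by linarith [ht.1]) c))]
  exact intervalIntegral.norm_integral_le_of_norm_le hT
    (ae_of_all _ fun t ht => hf t ht.1.le)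
    (intervalIntegrable_exp_mul_rpow c one_pos (by linarith))

lemma isLittleO_const_exp_mul_rpow (K d : ℝ) :
    (fun _ : ℝ => K) =o[atTop] fun T => exp T * T ^ d := by
  refine isLittleO_const_left.2 (.inr (tendsto_norm_atTop_atTop.comp ?_))
  refine (tendsto_exp_div_rpow_atTop (-d)).congr' ?_
  filter_upwards [eventually_ge_atTop 0] with T hT
  rw [rpow_neg hT, div_inv_eq_mul]

lemma tendsto_rpow_mul_abs_comp_exp_div_exp_of_isBigO {f : ℝ → ℝ} (β : ℝ) {ε : ℝ} (hε : 0 < ε)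
    (hf : f =O[atTop] fun x => x ^ (1 - ε)) :
    Tendsto (fun T => T ^ β * |f (exp T)| / exp T) atTop (𝓝 0) := by
  have hdecay : Tendsto (fun T => T ^ β / exp T * exp T ^ (1 - ε)) atTop (𝓝 0) := by
    refine (tendsto_rpow_mul_exp_neg_mul_atTop_nhds_zero β ε hε).congr fun T => ?_
    rw [← exp_mul, div_mul_eq_mul_div, mul_div_assoc, ← exp_sub]
    ring_nf
  have h := (((isBigO_refl (fun T => T ^ β / exp T) atTop).mul
    (hf.comp_tendsto tendsto_exp_atTop)).trans_tendsto hdecay).abs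
  rw [abs_zero] at h
  refine h.congr' ?_
  filter_upwards [eventually_ge_atTop 0] with T hT
  simp only [Function.comp_apply, abs_mul, abs_div, abs_of_nonneg (rpow_nonneg hT _),
    abs_of_pos (exp_pos T)]
  ring

end ExpRpow

section ExpCosRpow

variable {α : ℝ}

noncomputable def approxPrimitive (α t : ℝ) : ℝ :=
  exp t * (sin (t ^ α) * t ^ (1 - α) / α + cos (t ^ α) * t ^ (2 - 2 * α) / α ^ 2)

lemma hasDerivAt_approxPrimitive (hα : α ≠ 0) {t : ℝ} (ht : 0 < t) :
    HasDerivAt (approxPrimitive α)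
      (exp t * cos (t ^ α) + ((1 - α) / α * (exp t * t ^ (-α) * sin (t ^ α))
        + (2 - 2 * α) / α ^ 2 * (exp t * t ^ (1 - 2 * α) * cos (t ^ α))
        + 1 / α ^ 2 * (exp t * t ^ (2 - 2 * α) * cos (t ^ α)))) t := by
  have hpow (c : ℝ) : HasDerivAt (fun s : ℝ => s ^ c) (c * t ^ (c - 1)) t :=
    hasDerivAt_rpow_const (.inl ht.ne')
  have h := (hasDerivAt_exp t).mul
    ((((hpow α).sin.mul (hpow (1 - α))).div_const α).add
      (((hpow α).cos.mul (hpow (2 - 2 * α))).div_const (α ^ 2)))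
  refine h.congr_deriv ?_
  have e1 : t ^ (α - 1) * t ^ (1 - α) = 1 := by rw [← rpow_add ht]; simp
  have e2 : t ^ (α - 1) * t ^ (2 - 2 * α) = t ^ (1 - α) := by rw [← rpow_add ht]; ring_nf
  have e3 : t ^ (1 - α - 1) = t ^ (-α) := by ring_nf
  have e4 : t ^ (2 - 2 * α - 1) = t ^ (1 - 2 * α) := by ring_nf
  simp only [Pi.mul_apply, Pi.add_apply, e3, e4]
  linear_combination (norm := skip) (exp t * cos (t ^ α)) * e1 - (exp t * sin (t ^ α) / α) * e2
  field_simp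
  ring

lemma integral_exp_mul_cos_rpow_eq (hα : α ≠ 0) {T : ℝ} (hT : 0 < T) :
    ∫ t in (1:ℝ)..T, exp t * cos (t ^ α) = approxPrimitive α T - approxPrimitive α 1
      - (1 - α) / α * (∫ t in (1:ℝ)..T, exp t * t ^ (-α) * sin (t ^ α))
      - (2 - 2 * α) / α ^ 2 * (∫ t in (1:ℝ)..T, exp t * t ^ (1 - 2 * α) * cos (t ^ α))
      - 1 / α ^ 2 * ∫ t in (1:ℝ)..T, exp t * t ^ (2 - 2 * α) * cos (t ^ α) := by
  have hint {f : ℝ → ℝ} (hf : ContinuousOn f (Ioi 0)) : IntervalIntegrable f volume 1 T :=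
    .of_continuousOn_Ioi hf one_pos hT
  have h1 := hint (f := fun t => exp t * t ^ (-α) * sin (t ^ α))
    (by fun_prop (disch := intros; simp_all [ne_of_gt]))
  have h2 := hint (f := fun t => exp t * t ^ (1 - 2 * α) * cos (t ^ α))
    (by fun_prop (disch := intros; simp_all [ne_of_gt]))
  have h3 := hint (f := fun t => exp t * t ^ (2 - 2 * α) * cos (t ^ α))
    (by fun_prop (disch := intros; simp_all [ne_of_gt]))
  have h0 := hint (f := fun t => exp t * cos (t ^ α))
    (by fun_prop (disch := intros; simp_all [ne_of_gt]))
  have hftc := intervalIntegral.integral_eq_sub_of_hasDerivAt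
    (fun t ht => hasDerivAt_approxPrimitive hα (ordConnected_Ioi.uIcc_subset one_pos hT ht))
    (h0.add (((h1.const_mul _).add (h2.const_mul _)).add (h3.const_mul _)))
  rw [intervalIntegral.integral_add h0
      (((h1.const_mul _).add (h2.const_mul _)).add (h3.const_mul _)),
    intervalIntegral.integral_add ((h1.const_mul _).add (h2.const_mul _)) (h3.const_mul _),
    intervalIntegral.integral_add (h1.const_mul _) (h2.const_mul _),
    intervalIntegral.integral_const_mul, intervalIntegral.integral_const_mul,
    intervalIntegral.integral_const_mul] at hftc
  linarith

theorem isLittleO_integral_exp_mul_cos_rpow_sub (hα : 1 < α) :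
    (fun T => (∫ t in (0:ℝ)..T, exp t * cos (t ^ α)) - exp T * sin (T ^ α) * T ^ (1 - α) / α)
      =o[atTop] fun T => exp T * T ^ (1 - α) := by
  have hα0 : α ≠ 0 := by positivity
  have hrem {c : ℝ} (hc : c ≤ 0) (hcd : c < 1 - α) {w : ℝ → ℝ} (hw : ∀ t, |w t| ≤ 1) :
      (fun T => ∫ t in (1:ℝ)..T, exp t * t ^ c * w t) =o[atTop] fun T => exp T * T ^ (1 - α) :=
    isLittleO_integral_of_abs_le (fun t ht => by
      rw [abs_mul, abs_of_nonneg (by positivity)]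
      exact mul_le_of_le_one_right (by positivity) (hw t)) hc hcd
  have hconst := isLittleO_const_exp_mul_rpow
    ((∫ t in (0:ℝ)..1, exp t * cos (t ^ α)) - approxPrimitive α 1) (1 - α)
  have hbdry : (fun T => 1 / α ^ 2 * (exp T * T ^ (2 - 2 * α) * cos (T ^ α)))
      =o[atTop] fun T => exp T * T ^ (1 - α) :=
    ((isBigO_mul_of_abs_le_one fun T => abs_cos_le_one _).trans_isLittleO
      (isLittleO_exp_mul_rpow (by linarith))).const_mul_left _
  have h1 := (hrem (c := -α) (w := fun t => sin (t ^ α)) (by linarith) (by linarith)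
    fun t => abs_sin_le_one _).const_mul_left ((1 - α) / α)
  have h2 := (hrem (c := 1 - 2 * α) (w := fun t => cos (t ^ α)) (by linarith) (by linarith)
    fun t => abs_cos_le_one _).const_mul_left ((2 - 2 * α) / α ^ 2)
  have h3 := (hrem (c := 2 - 2 * α) (w := fun t => cos (t ^ α)) (by linarith) (by linarith)
    fun t => abs_cos_le_one _).const_mul_left (1 / α ^ 2)
  refine ((((hconst.add hbdry).sub h1).sub h2).sub h3).congr' ?_ .rfl
  have hcont : Continuous fun t : ℝ => exp t * cos (t ^ α) :=
    continuous_exp.mul (continuous_cos.comp (continuous_rpow_const (by linarith)))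
  filter_upwards [eventually_gt_atTop 0] with T hT
  rw [← intervalIntegral.integral_add_adjacent_intervals (b := 1) (c := T)
    (hcont.intervalIntegrable _ _) (hcont.intervalIntegrable _ _),
    integral_exp_mul_cos_rpow_eq hα0 hT]
  simp only [approxPrimitive]
  ring

lemma integral_one_add_cos_log_rpow_exp_sub (hα : 0 ≤ α) (T : ℝ) :
    (∫ u in (1:ℝ)..exp T, (1 + cos (log u ^ α))) - exp T
      = (∫ t in (0:ℝ)..T, exp t * cos (t ^ α)) - 1 := by
  have hg : ContinuousOn (fun u => cos (log u ^ α)) (Ioi 0) :=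
    fun u hu => ((continuous_cos.comp (continuous_rpow_const hα)).continuousAt.comp
      (continuousAt_log hu.ne')).continuousWithinAt
  have hsubst := intervalIntegral.integral_comp_mul_deriv' (a := 0) (b := T)
    (fun t _ => hasDerivAt_exp t) continuous_exp.continuousOn
    (hg.mono (image_subset_iff.2 fun t _ => exp_pos t))
  simp only [Function.comp_def, log_exp, exp_zero] at hsubst
  rw [intervalIntegral.integral_add intervalIntegrable_const
    (.of_continuousOn_Ioi hg one_pos (exp_pos T)), ← hsubst, intervalIntegral.integral_const]
  simp only [smul_eq_mul, mul_one, mul_comm (exp _)]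
  ring

lemma tendsto_rpow_mul_abs_integral_div_exp_sub (hα : 1 < α) :
    Tendsto (fun T => T ^ (α - 1) * |(∫ t in (0:ℝ)..T, exp t * cos (t ^ α)) - 1| / exp T
      - |sin (T ^ α)| / α) atTop (𝓝 0) := by
  set main := fun T => exp T * sin (T ^ α) * T ^ (1 - α) / α
  have herr : (fun T => (∫ t in (0:ℝ)..T, exp t * cos (t ^ α)) - 1 - main T)
      =o[atTop] fun T => exp T * T ^ (1 - α) :=
    ((isLittleO_integral_exp_mul_cos_rpow_sub hα).sub
      (isLittleO_const_exp_mul_rpow 1 (1 - α))).congr_left fun T => by ring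
  have habs : (fun T => |(∫ t in (0:ℝ)..T, exp t * cos (t ^ α)) - 1| - |main T|)
      =o[atTop] fun T => exp T * T ^ (1 - α) :=
    (IsBigO.of_bound' (.of_forall fun T => by
      simpa only [norm_eq_abs] using abs_abs_sub_abs_le_abs_sub _ _)).trans_isLittleO herr
  refine (isLittleO_one_iff ℝ).1
    (((isBigO_refl (fun T => T ^ (α - 1) / exp T) atTop).mul_isLittleO habs).congr' ?_ ?_)
  · filter_upwards [eventually_gt_atTop 0] with T hT
    have hpow : T ^ (α - 1) * T ^ (1 - α) = 1 := by rw [← rpow_add hT]; simp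
    simp only [main, abs_div, abs_mul, abs_of_pos (exp_pos T), abs_of_pos (rpow_pos_of_pos hT _),
      abs_of_pos (by linarith : 0 < α)]
    field_simp
    linear_combination (-(exp T * |sin (T ^ α)|)) * hpow
  · filter_upwards [eventually_gt_atTop 0] with T hT
    have hpow : T ^ (α - 1) * T ^ (1 - α) = 1 := by rw [← rpow_add hT]; simp
    field_simp
    simpa [mul_comm] using hpow

lemma frequently_sin_rpow_eq_one (hα : 0 < α) : ∃ᶠ T in atTop, sin (T ^ α) = 1 := by
  have hseq : Tendsto (fun n : ℕ => π / 2 + n * (2 * π)) atTop atTop :=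
    tendsto_atTop_add_const_left _ _
      (tendsto_natCast_atTop_atTop.atTop_mul_const (by positivity))
  refine ((tendsto_rpow_atTop (inv_pos.2 hα)).comp hseq).frequently
    (Frequently.of_forall fun n => ?_)
  rw [Function.comp_apply, ← rpow_mul (by positivity), inv_mul_cancel₀ hα.ne', rpow_one,
    sin_add_nat_mul_two_pi, sin_pi_div_two]

lemma limsup_abs_sin_rpow_div (hα : 0 < α) :
    limsup (fun T => |sin (T ^ α)| / α) atTop = 1 / α := by
  have hle (T : ℝ) : |sin (T ^ α)| / α ≤ 1 / α := by gcongr; exact abs_sin_le_one _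
  apply le_antisymm
  · exact limsup_le_of_le (isBoundedUnder_of_eventually_ge (a := 0)
      (.of_forall fun T => by positivity)).isCoboundedUnder_le (.of_forall hle)
  · exact le_limsup_of_frequently_le
      ((frequently_sin_rpow_eq_one hα).mono fun T hT => by simp [hT])
      (isBoundedUnder_of_eventually_le (.of_forall hle))

lemma limsup_rpow_mul_abs_integral_sub_one_div_exp (hα : 1 < α) :
    limsup (fun T => T ^ (α - 1) * |(∫ t in (0:ℝ)..T, exp t * cos (t ^ α)) - 1| / exp T) atTop
      = 1 / α := by
  have hα0 : 0 < α := by linarith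
  have hle (T : ℝ) : |sin (T ^ α)| / α ≤ 1 / α := by gcongr; exact abs_sin_le_one _
  rw [← limsup_abs_sin_rpow_div hα0]
  exact limsup_eq_of_tendsto_sub (tendsto_rpow_mul_abs_integral_div_exp_sub hα)
    (isBoundedUnder_of_eventually_le (.of_forall hle))
    (isBoundedUnder_of_eventually_ge (a := 0) (.of_forall fun T => by positivity))

end ExpCosRpow

/-- For `S(x) = ∫₁ˣ (1 + cos((log u)^α)) du` one has
`limsup_{x→∞} (log x)^{α−1} |S(x) − x| / x = 1/α`; in particular `S(x) − x`
is not `O(x^{1−ε})` for any `ε > 0`, disproving Müger's conjecture. -/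
theorem stmt_16 (α : ℝ) (hα : 1 < α) :
    limsup (fun x : ℝ => Real.log x ^ (α - 1) *
        |(∫ u in (1:ℝ)..x, (1 + Real.cos (Real.log u ^ α))) - x| / x)
      atTop = 1 / α ∧
    ∀ ε : ℝ, 0 < ε →
      ¬ Asymptotics.IsBigO atTop
          (fun x : ℝ => (∫ u in (1:ℝ)..x, (1 + Real.cos (Real.log u ^ α))) - x)
          (fun x : ℝ => x ^ (1 - ε)) := by
  have hα0 : 0 < α := by linarith
  set φ := fun x : ℝ => Real.log x ^ (α - 1) *
    |(∫ u in (1:ℝ)..x, (1 + Real.cos (Real.log u ^ α))) - x| / x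
  have hcomp : limsup φ atTop = limsup (φ ∘ exp) atTop := by rw [limsup_comp, map_exp_atTop]
  have hφ : φ ∘ exp = fun T => T ^ (α - 1) *
      |(∫ u in (1:ℝ)..exp T, (1 + cos (log u ^ α))) - exp T| / exp T := by
    funext T
    simp only [φ, Function.comp_apply, log_exp]
  have hlimsup : limsup φ atTop = 1 / α := by
    simp only [hcomp, hφ, integral_one_add_cos_log_rpow_exp_sub hα0.le]
    exact limsup_rpow_mul_abs_integral_sub_one_div_exp hα
  refine ⟨hlimsup, fun ε hε hO => ?_⟩
  have h := (tendsto_rpow_mul_abs_comp_exp_div_exp_of_isBigO (α - 1) hε hO).limsup_eq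
  rw [← hφ, ← hcomp, hlimsup] at h
  exact (one_div_pos.2 hα0).ne' h
end

section
/- For every integer k ≥ 0, lim_{ε→0⁺} [ ∫_ε^∞ e^{−t} t^{−k−1} dt − Σ_{j=0}^{k−1} (−1)^j ε^{j−k} / ( j! (k−j) ) + (−1)^k (log ε)/k! ] = ( (−1)^k / k! ) ( −γ + Σ_{j=1}^{k} 1/j ), where γ is the Euler–Mascheroni constant (for k = 0 the first sum is empty and the value is −γ). -/
/-!
Write `Γ(s, x) = ∫_x^∞ e^{-t} t^{s-1} dt`. Integrating by parts,
`Γ(s + 1, x) = s Γ(s, x) + x^s e^{-x}`. At `s = -(k+1)` this gives, for the regularised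
integral `F_k(ε)` of the statement,
`(k + 1) F_{k+1}(ε) = (e^{-ε} - T_{k+1}(-ε)) / ε^{k+1} - F_k(ε)`,
where `T_{k+1}` is the Taylor polynomial of degree `k` of `exp`; the polar terms cancel by an
identity between polynomials in `ε`. The Taylor remainder term tends to `(-1)^{k+1}/(k+1)!`,
which yields the induction step. For `k = 0`, integrating by parts against `log` gives
`Γ(0, ε) + log ε = ∫_ε^∞ e^{-t} log t dt + (1 - e^{-ε}) log ε`,
which tends to `∫_0^∞ e^{-t} log t dt = Γ'(1) = -γ`.
-/

open MeasureTheory Set Filter Real Topology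

noncomputable def upperIncompleteGamma (s x : ℝ) : ℝ :=
  ∫ t in Ioi x, exp (-t) * t ^ (s - 1)

lemma integrableOn_exp_neg_mul_rpow_Ioi (s : ℝ) {x : ℝ} (hx : 0 < x) :
    IntegrableOn (fun t => exp (-t) * t ^ s) (Ioi x) := by
  rcases le_or_gt s 0 with hs | hs
  · refine ((exp_neg_integrableOn_Ioi x one_pos).mul_const (x ^ s)).mono' ?_ ?_
    · fun_prop
    · filter_upwards [ae_restrict_mem measurableSet_Ioi] with t (ht : x < t)
      rw [norm_of_nonneg (mul_pos (exp_pos _) (rpow_pos_of_pos (hx.trans ht) _)).le, neg_one_mul]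
      exact mul_le_mul_of_nonneg_left (rpow_le_rpow_of_nonpos hx ht.le hs) (exp_pos _).le
  · simpa using (GammaIntegral_convergent (s := s + 1) (by linarith)).mono_set
      (Ioi_subset_Ioi hx.le)

lemma integral_Ioi_exp_neg_mul_deriv {g g' : ℝ → ℝ} {a : ℝ}
    (hg : ∀ t ∈ Ici a, HasDerivAt g (g' t) t)
    (hg' : IntegrableOn (fun t => exp (-t) * g' t) (Ioi a))
    (hgi : IntegrableOn (fun t => exp (-t) * g t) (Ioi a))
    (hlim : Tendsto (fun t => exp (-t) * g t) atTop (𝓝 0)) :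
    ∫ t in Ioi a, exp (-t) * g' t = (∫ t in Ioi a, exp (-t) * g t) - exp (-a) * g a := by
  have hderiv : ∀ t ∈ Ici a,
      HasDerivAt (fun t => exp (-t) * g t) (exp (-t) * g' t - exp (-t) * g t) t := by
    intro t ht
    have hexp : HasDerivAt (fun t => exp (-t)) (-exp (-t)) t := by
      simpa using (hasDerivAt_neg t).exp
    exact (hexp.mul (hg t ht)).congr_deriv (by ring)
  have := integral_Ioi_of_hasDerivAt_of_tendsto' hderiv (hg'.sub hgi) hlim
  rw [integral_sub hg' hgi] at this
  linarith

lemma upperIncompleteGamma_add_one (s : ℝ) {x : ℝ} (hx : 0 < x) :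
    upperIncompleteGamma (s + 1) x = s * upperIncompleteGamma s x + x ^ s * exp (-x) := by
  have hderiv : ∀ t ∈ Ici x, HasDerivAt (fun t => t ^ s) (s * t ^ (s - 1)) t := fun t ht =>
    hasDerivAt_rpow_const (Or.inl (hx.trans_le ht).ne')
  have key := integral_Ioi_exp_neg_mul_deriv hderiv
    (IntegrableOn.congr_fun (f := fun t => s * (exp (-t) * t ^ (s - 1)))
      ((integrableOn_exp_neg_mul_rpow_Ioi (s - 1) hx).const_mul s)
      (fun t _ => mul_left_comm _ _ _) measurableSet_Ioi)
    (integrableOn_exp_neg_mul_rpow_Ioi s hx)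
    (((tendsto_rpow_mul_exp_neg_mul_atTop_nhds_zero s 1 one_pos).congr
      fun t => by rw [neg_one_mul, mul_comm]))
  simp only [mul_left_comm _ s, integral_const_mul] at key
  simp only [upperIncompleteGamma, add_sub_cancel_right]
  linarith

lemma integrableOn_exp_neg_mul_log :
    IntegrableOn (fun t => exp (-t) * log t) (Ioi 0) := by
  rw [← Ioc_union_Ioi_eq_Ioi zero_le_one]
  refine IntegrableOn.union ?_ ?_
  · have hlog : IntegrableOn log (Icc 0 1) :=
      (intervalIntegrable_iff_integrableOn_Icc_of_le zero_le_one).1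
        intervalIntegral.intervalIntegrable_log'
    exact (hlog.continuousOn_mul (by fun_prop) isCompact_Icc).mono_set Ioc_subset_Icc_self
  · refine (integrableOn_exp_neg_mul_rpow_Ioi 1 one_pos).mono' ?_ ?_
    · fun_prop
    · filter_upwards [ae_restrict_mem measurableSet_Ioi] with t (ht : 1 < t)
      rw [norm_mul, norm_of_nonneg (exp_pos _).le, norm_of_nonneg (log_nonneg ht.le), rpow_one]
      exact mul_le_mul_of_nonneg_left (log_le_self (zero_le_one.trans ht.le)) (exp_pos _).le

lemma integral_exp_neg_mul_log :
    ∫ t in Ioi 0, exp (-t) * log t = -eulerMascheroniConstant := by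
  have hGammaIntegral := Complex.hasDerivAt_GammaIntegral (s := 1) (by simp)
  have hre : HasDerivAt Gamma (∫ t in Ioi 0, exp (-t) * log t) 1 := by
    refine (hGammaIntegral.real_of_complex).congr_of_eventuallyEq ?_ |>.congr_deriv ?_
    · filter_upwards [lt_mem_nhds one_pos] with s hs
      rw [Gamma, Complex.Gamma_eq_integral (by simpa using hs)]
    · simp only [sub_self, Complex.cpow_zero, one_mul, ← Complex.ofReal_mul,
        integral_complex_ofReal, Complex.ofReal_re]
      exact integral_congr_ae (ae_of_all _ fun t => mul_comm (log t) _)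
  exact hre.unique hasDerivAt_Gamma_one

lemma upperIncompleteGamma_zero {x : ℝ} (hx : 0 < x) :
    upperIncompleteGamma 0 x = (∫ t in Ioi x, exp (-t) * log t) - exp (-x) * log x := by
  have hderiv : ∀ t ∈ Ici x, HasDerivAt log t⁻¹ t := fun t ht =>
    hasDerivAt_log (hx.trans_le ht).ne'
  have hlim : Tendsto (fun t => exp (-t) * log t) atTop (𝓝 0) := by
    refine Asymptotics.IsBigO.trans_tendsto ?_
      ((tendsto_pow_mul_exp_neg_atTop_nhds_zero 1).congr fun t => by rw [pow_one, mul_comm])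
    exact (Asymptotics.isBigO_refl _ _).mul isLittleO_log_id_atTop.isBigO
  rw [← integral_Ioi_exp_neg_mul_deriv hderiv ?_
    (integrableOn_exp_neg_mul_log.mono_set (Ioi_subset_Ioi hx.le)) hlim]
  · refine setIntegral_congr_fun measurableSet_Ioi fun t _ => ?_
    simp [rpow_neg_one]
  · simpa [rpow_neg_one] using integrableOn_exp_neg_mul_rpow_Ioi (-1) hx

lemma tendsto_setIntegral_Ioi_nhdsGT {E : Type*} [NormedAddCommGroup E] [NormedSpace ℝ E]
    {f : ℝ → E} {a : ℝ} (hf : IntegrableOn f (Ioi a)) :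
    Tendsto (fun x => ∫ t in Ioi x, f t) (𝓝[>] a) (𝓝 (∫ t in Ioi a, f t)) := by
  refine ((aecover_Ioi_of_Ioi (μ := volume) (l := 𝓝[>] a) (a := id)
    (tendsto_id.mono_left nhdsWithin_le_nhds)).integral_tendsto_of_countably_generated hf).congr' ?_
  filter_upwards [self_mem_nhdsWithin] with x (hx : a < x)
  rw [Measure.restrict_restrict measurableSet_Ioi, id, inter_eq_left.2 (Ioi_subset_Ioi hx.le)]

lemma tendsto_upperIncompleteGamma_zero_add_log :
    Tendsto (fun x => upperIncompleteGamma 0 x + log x) (𝓝[>] 0)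
      (𝓝 (-eulerMascheroniConstant)) := by
  have hexp : (fun x => exp (-x) - 1) =O[𝓝 0] fun x => x := by
    simpa using (hasDerivAt_neg (0 : ℝ)).exp.hasFDerivAt.isBigO_sub
  have hsmall : Tendsto (fun x => (exp (-x) - 1) * log x) (𝓝[>] 0) (𝓝 0) := by
    refine ((hexp.mono nhdsWithin_le_nhds).mul (Asymptotics.isBigO_refl log _)).trans_tendsto ?_
    simpa [mul_comm] using tendsto_log_mul_rpow_nhdsGT_zero one_pos
  have := (tendsto_setIntegral_Ioi_nhdsGT integrableOn_exp_neg_mul_log).sub hsmall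
  rw [integral_exp_neg_mul_log, sub_zero] at this
  refine this.congr' ?_
  filter_upwards [self_mem_nhdsWithin] with x (hx : 0 < x)
  rw [upperIncompleteGamma_zero hx]
  ring

lemma tendsto_exp_sub_sum_range_div_pow (n : ℕ) :
    Tendsto (fun x => (exp x - ∑ i ∈ Finset.range n, x ^ i / i.factorial) / x ^ n) (𝓝[≠] 0)
      (𝓝 (1 / n.factorial)) := by
  have h := ((exp_sub_sum_range_succ_isLittleO_pow n).tendsto_div_nhds_zero.mono_left
    (nhdsWithin_le_nhds (s := {0}ᶜ))).const_add (1 / n.factorial : ℝ)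
  rw [add_zero] at h
  refine h.congr' ?_
  filter_upwards [self_mem_nhdsWithin] with x (hx : x ≠ 0)
  rw [Finset.sum_range_succ]
  field_simp
  ring

lemma tendsto_exp_neg_sub_sum_range_div_pow (n : ℕ) :
    Tendsto (fun x => (exp (-x) - ∑ i ∈ Finset.range n, (-x) ^ i / i.factorial) / x ^ n) (𝓝[≠] 0)
      (𝓝 ((-1) ^ n / n.factorial)) := by
  have hneg : Tendsto Neg.neg (𝓝[≠] (0 : ℝ)) (𝓝[≠] 0) :=
    tendsto_nhdsWithin_of_tendsto_nhds_of_eventually_within _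
      ((continuous_neg.tendsto' 0 0 neg_zero).mono_left nhdsWithin_le_nhds)
      (eventually_nhdsWithin_of_forall fun x hx => neg_ne_zero.2 hx)
  have h := ((tendsto_exp_sub_sum_range_div_pow n).comp hneg).const_mul ((-1) ^ n)
  rw [mul_one_div] at h
  refine h.congr' ?_
  filter_upwards [self_mem_nhdsWithin] with x (hx : x ≠ 0)
  rw [Function.comp_apply, neg_pow x n]
  field_simp

noncomputable def finitePartPoly (k : ℕ) (x : ℝ) : ℝ :=
  ∑ j ∈ Finset.range k, (-1) ^ j * x ^ j / (j.factorial * ((k : ℝ) - j))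

lemma sum_range_mul_rpow_sub_eq_finitePartPoly_div (k : ℕ) {x : ℝ} (hx : 0 < x) :
    ∑ j ∈ Finset.range k, (-1 : ℝ) ^ j * x ^ ((j : ℝ) - k) / (j.factorial * ((k : ℝ) - j)) =
      finitePartPoly k x / x ^ k := by
  rw [finitePartPoly, Finset.sum_div]
  refine Finset.sum_congr rfl fun j _ => ?_
  rw [rpow_sub hx, rpow_natCast, rpow_natCast]
  ring

lemma succ_mul_finitePartPoly_succ (k : ℕ) (x : ℝ) :
    (k + 1) * finitePartPoly (k + 1) x =
      ∑ i ∈ Finset.range (k + 1), (-x) ^ i / i.factorial - x * finitePartPoly k x := by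
  simp only [finitePartPoly, Finset.mul_sum]
  rw [Finset.sum_range_succ', Finset.sum_range_succ' (fun i => (-x) ^ i / (i.factorial : ℝ)),
    add_sub_right_comm, ← Finset.sum_sub_distrib]
  congr 1
  · refine Finset.sum_congr rfl fun i hi => ?_
    have hik : (i : ℝ) < k := by exact_mod_cast Finset.mem_range.1 hi
    have : (k : ℝ) + 1 - (i + 1) ≠ 0 := by linarith
    have : (k : ℝ) - i ≠ 0 := by linarith
    push_cast [Nat.factorial_succ]
    field_simp
    ring
  · simp [field]

noncomputable def finitePartApprox (k : ℕ) (x : ℝ) : ℝ :=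
  upperIncompleteGamma (-k) x -
    ∑ j ∈ Finset.range k, (-1 : ℝ) ^ j * x ^ ((j : ℝ) - k) / (j.factorial * ((k : ℝ) - j)) +
    (-1) ^ k * log x / k.factorial

lemma succ_mul_finitePartApprox_succ (k : ℕ) {x : ℝ} (hx : 0 < x) :
    (k + 1) * finitePartApprox (k + 1) x =
      (exp (-x) - ∑ i ∈ Finset.range (k + 1), (-x) ^ i / i.factorial) / x ^ (k + 1) -
        finitePartApprox k x := by
  have hΓ := upperIncompleteGamma_add_one (-((k + 1 : ℕ) : ℝ)) hx
  rw [rpow_neg hx.le, rpow_natCast, show -((k + 1 : ℕ) : ℝ) + 1 = -k by push_cast; ring] at hΓ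
  simp only [finitePartApprox, sum_range_mul_rpow_sub_eq_finitePartPoly_div _ hx, hΓ,
    Nat.factorial_succ]
  push_cast
  field_simp
  linear_combination (-x ^ k * k.factorial) * succ_mul_finitePartPoly_succ k x

/-- The Hadamard finite part `Fp ∫₀^∞ e^{−t} t^{−k−1} dt` equals
`((−1)^k/k!)(−γ + ∑_{j=1}^k 1/j)`, where `γ` is the Euler–Mascheroni
constant. -/
theorem stmt_17 (k : ℕ) :
    Tendsto (fun ε : ℝ =>
        (∫ t in Ioi ε, Real.exp (-t) * t ^ (-(k:ℝ) - 1)) -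
          (∑ j ∈ Finset.range k,
            (-1:ℝ) ^ j * ε ^ ((j:ℝ) - k) / (j.factorial * ((k:ℝ) - j))) +
          (-1:ℝ) ^ k * Real.log ε / k.factorial)
      (nhdsWithin 0 (Ioi 0))
      (nhds ((-1:ℝ) ^ k / k.factorial *
        (-Real.eulerMascheroniConstant +
          ∑ j ∈ Finset.range k, 1 / ((j:ℝ) + 1)))) := by
  change Tendsto (finitePartApprox k) _ _
  induction k with
  | zero =>
    have h : finitePartApprox 0 = fun x => upperIncompleteGamma 0 x + log x := by
      funext x
      simp [finitePartApprox]
    simpa [h] using tendsto_upperIncompleteGamma_zero_add_log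
  | succ k ih =>
    have hrem := (tendsto_exp_neg_sub_sum_range_div_pow (k + 1)).mono_left
      (nhdsWithin_mono 0 fun x (hx : 0 < x) => hx.ne')
    have hvalue : (-1 : ℝ) ^ (k + 1) / (k + 1).factorial *
          (-eulerMascheroniConstant + ∑ j ∈ Finset.range (k + 1), 1 / ((j : ℝ) + 1)) =
        ((-1) ^ (k + 1) / (k + 1).factorial - (-1) ^ k / k.factorial *
          (-eulerMascheroniConstant + ∑ j ∈ Finset.range k, 1 / ((j : ℝ) + 1))) / (k + 1) := by
      rw [Finset.sum_range_succ, Nat.factorial_succ]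
      push_cast
      field_simp
      ring
    rw [hvalue]
    refine ((hrem.sub ih).div_const _).congr' ?_
    filter_upwards [self_mem_nhdsWithin] with x (hx : 0 < x)
    rw [eq_comm, eq_div_iff (by positivity), mul_comm]
    exact_mod_cast succ_mul_finitePartApprox_succ k hx
end
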